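/- Let d ≥ 0 and let G be a connected locally finite (2d+1)-regular simple graph on vertex set V. If G is bipartite, then there exist permutations σ₁, …, σ_d of V and a fixed-point-free involution τ of V such that for every vertex x the 2d+1 vertices σ₁(x), σ₁⁻¹(x), …, σ_d(x), σ_d⁻¹(x), τ(x) are pairwise distinct and their set is exactly the neighborhood of x in G. If G is not bipartite, then the same conclusion holds for the canonical double cover G ⊗ K₂ on the vertex set V × Bool. (Equivalently: either G, if it is bipartite, or G ⊗ K₂, otherwise, is isomorphic to a Schreier graph of F_d ∗ (ℤ/2ℤ).) -/

import Mathlib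

/-- The canonical double cover `G ⊗ K₂` of a simple graph `G`: vertices are `V × Bool`,
and `(v, b)` is adjacent to `(w, c)` iff `v` is adjacent to `w` in `G` and `b ≠ c`. -/
def doubleCover {V : Type*} (G : SimpleGraph V) : SimpleGraph (V × Bool) where
  Adj x y := G.Adj x.1 y.1 ∧ x.2 ≠ y.2
  symm := ⟨fun _ _ h => ⟨G.symm.symm _ _ h.1, Ne.symm h.2⟩⟩
  loopless := ⟨fun _ h => h.2 rfl⟩

/-- A graph `H` carries permutations `σ₁, …, σ_d` and a fixed-point-free involution `τ` of its
vertex set such that for every vertex `x` the `2d+1` vertices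
`σ₁ x, σ₁⁻¹ x, …, σ_d x, σ_d⁻¹ x, τ x` are pairwise distinct and form exactly the
neighborhood of `x`.  (This encodes being a Schreier graph of `F_d ∗ (ℤ/2ℤ)`.) -/
def FreeProductStructure {W : Type*} (H : SimpleGraph W) (d : ℕ) : Prop :=
  ∃ (σ : Fin d → Equiv.Perm W) (τ : Equiv.Perm W),
    (∀ x, τ (τ x) = x) ∧ (∀ x, τ x ≠ x) ∧
    ∀ x : W,
      Function.Injective
        (Sum.elim (Sum.elim (fun i : Fin d => σ i x) (fun i : Fin d => (σ i)⁻¹ x))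
          (fun _ : Fin 1 => τ x)) ∧
      Set.range
        (Sum.elim (Sum.elim (fun i : Fin d => σ i x) (fun i : Fin d => (σ i)⁻¹ x))
          (fun _ : Fin 1 => τ x)) = H.neighborSet x

/-!
A locally finite `k`-regular bipartite graph, finite or not, splits into `k` perfect matchings:
Hall's condition holds in every regular graph of positive degree by double counting, so Hall's
theorem for locally finite bipartite graphs yields a perfect matching, and deleting it leaves a
`(k - 1)`-regular bipartite graph. A perfect matching is a fixed-point-free involution. For
`k = 2d + 1` one matching serves as `τ` and the others are grouped into pairs `(α_i, β_i)`: the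
permutation `σ_i` applying `α_i` on one side of the bipartition and `β_i` on the other has an
inverse doing the opposite, so `σ_i x` and `σ_i⁻¹ x` are the `α_i`- and `β_i`-neighbours of `x`.
If `G` is not bipartite, `G ⊗ K₂` is, and it has the same degrees.
-/

open Function Equiv

theorem Equiv.Perm.exists_piecewise_of_involutive {V : Type*} {s : Set V} {α β : Perm V}
    (hα : Involutive α) (hβ : Involutive β) (hαs : ∀ x, α x ∈ s ↔ x ∉ s)
    (hβs : ∀ x, β x ∈ s ↔ x ∉ s) :
    ∃ σ : Perm V, ∀ x, (x ∈ s → σ x = α x ∧ σ⁻¹ x = β x) ∧ (x ∉ s → σ x = β x ∧ σ⁻¹ x = α x) := by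
  classical
  refine ⟨⟨s.piecewise α β, s.piecewise β α, fun x => ?_, fun x => ?_⟩, fun x => ?_⟩ <;>
    by_cases hx : x ∈ s <;> simp [Set.piecewise, hx, hαs, hβs, hα x, hβ x, Perm.inv_def]

namespace SimpleGraph

variable {V : Type*} {G H : SimpleGraph V} {s t : Set V}

theorem degree_eq_ncard_neighborSet (G : SimpleGraph V) [G.LocallyFinite] (v : V) :
    G.degree v = (G.neighborSet v).ncard := by
  rw [← card_neighborSet_eq_degree, ← Nat.card_coe_set_eq, Nat.card_eq_fintype_card]

theorem IsRegularOfDegree.ncard_le_ncard_iUnion_neighborSet [G.LocallyFinite] {k : ℕ}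
    (hG : G.IsRegularOfDegree k) (hk : 0 < k) (s : Set V) :
    s.ncard ≤ (⋃ x ∈ s, G.neighborSet x).ncard := by
  classical
  rcases s.finite_or_infinite with hs | hs
  · lift s to Finset V using hs
    have hN : ⋃ x ∈ (s : Set V), G.neighborSet x = ↑(s.biUnion fun v => G.neighborFinset v) := by
      ext; simp
    rw [hN, Set.ncard_coe_finset, Set.ncard_coe_finset]
    refine Nat.le_of_mul_le_mul_right (Finset.card_mul_le_card_mul G.Adj (fun v hv => ?_)
      (fun w _ => ?_)) hk
    · rw [← hG v, ← card_neighborFinset_eq_degree]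
      refine Finset.card_le_card fun w hw => ?_
      rw [mem_neighborFinset] at hw
      exact Finset.mem_filter.mpr ⟨Finset.mem_biUnion.mpr ⟨v, hv, by simpa using hw⟩, hw⟩
    · rw [← hG w, ← card_neighborFinset_eq_degree]
      refine Finset.card_le_card fun v hv => ?_
      simpa [Finset.bipartiteBelow, adj_comm] using (Finset.mem_filter.mp hv).2
  · simp [hs.ncard]

theorem IsRegularOfDegree.of_neighborSet_eq_diff [G.LocallyFinite] [H.LocallyFinite] {k : ℕ}
    (hG : G.IsRegularOfDegree (k + 1)) {f : V → V} (hf : ∀ v, G.Adj v (f v))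
    (hH : ∀ v, H.neighborSet v = G.neighborSet v \ {f v}) : H.IsRegularOfDegree k := by
  intro v
  rw [degree_eq_ncard_neighborSet, hH,
    Set.ncard_sdiff_singleton_of_mem (s := G.neighborSet v) (hf v), ← degree_eq_ncard_neighborSet,
    hG v, Nat.add_sub_cancel]

theorem IsBipartiteWith.anti (h : G.IsBipartiteWith s t) (hle : H ≤ G) :
    H.IsBipartiteWith s t :=
  ⟨h.disjoint, fun _ _ hvw => h.mem_of_adj (hle hvw)⟩

theorem IsBipartiteWith.compl_right (h : G.IsBipartiteWith s t) : G.IsBipartiteWith s sᶜ := by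
  refine ⟨disjoint_compl_right, fun v w hvw => ?_⟩
  rcases h.mem_of_adj hvw with ⟨hv, hw⟩ | ⟨hv, hw⟩
  · exact .inl ⟨hv, h.disjoint.notMem_of_mem_right hw⟩
  · exact .inr ⟨h.disjoint.notMem_of_mem_right hv, hw⟩

theorem IsBipartiteWith.mem_iff_notMem_of_adj (h : G.IsBipartiteWith s sᶜ) {v w : V}
    (hvw : G.Adj v w) : w ∈ s ↔ v ∉ s := by
  rcases h.mem_of_adj hvw with ⟨hv, hw⟩ | ⟨hv, hw⟩ <;> simp_all

theorem Subgraph.IsPerfectMatching.exists_involutive {M : G.Subgraph}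
    (hM : M.IsPerfectMatching) :
    ∃ τ : Perm V, Involutive τ ∧ ∀ v, M.neighborSet v = {τ v} := by
  choose f hf hu using Subgraph.isPerfectMatching_iff.mp hM
  have hinv : Involutive f := fun v => (hu (f v) v (hf v).symm).symm
  exact ⟨hinv.toPerm, hinv, fun v => Set.ext fun w => ⟨hu v w, fun h => h ▸ hf v⟩⟩

/-- A 1-factorization of `G`, each perfect matching being recorded as the involution that
exchanges the ends of its edges. -/
structure IsOneFactorization {ι : Type*} (G : SimpleGraph V) (τ : ι → Perm V) : Prop where
  involutive : ∀ i, Involutive (τ i)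
  injective : ∀ v, Injective fun i => τ i v
  range_eq : ∀ v, Set.range (fun i => τ i v) = G.neighborSet v

theorem IsOneFactorization.adj {ι : Type*} {τ : ι → Perm V} (h : G.IsOneFactorization τ)
    (i : ι) (v : V) : G.Adj v (τ i v) := by
  rw [← mem_neighborSet, ← h.range_eq v]
  exact ⟨i, rfl⟩

theorem IsOneFactorization.comp_equiv {ι ι' : Type*} {τ : ι → Perm V}
    (h : G.IsOneFactorization τ) (e : ι' ≃ ι) : G.IsOneFactorization (τ ∘ e) :=
  ⟨fun i => h.involutive (e i), fun v => (h.injective v).comp e.injective,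
    fun v => (EquivLike.range_comp (fun i => τ i v) e).trans (h.range_eq v)⟩

theorem IsOneFactorization.cons {k : ℕ} {τ₀ : Perm V} {τ : Fin k → Perm V}
    (h₀ : Involutive τ₀) (hadj : ∀ v, G.Adj v (τ₀ v)) (hτ : H.IsOneFactorization τ)
    (hH : ∀ v, H.neighborSet v = G.neighborSet v \ {τ₀ v}) :
    G.IsOneFactorization (Fin.cons τ₀ τ : Fin (k + 1) → Perm V) := by
  have hrange : ∀ v, Set.range (fun i => τ i v) = G.neighborSet v \ {τ₀ v} :=
    fun v => (hτ.range_eq v).trans (hH v)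
  have hcons : ∀ v, (fun i => (Fin.cons τ₀ τ : Fin (k + 1) → Perm V) i v) =
      Fin.cons (τ₀ v) (fun i => τ i v) := fun v => by
    ext i; cases i using Fin.cases <;> rfl
  refine ⟨Fin.cases h₀ hτ.involutive, fun v => ?_, fun v => ?_⟩
  · rw [hcons, Fin.cons_injective_iff, hrange]
    exact ⟨fun h => h.2 rfl, hτ.injective v⟩
  · rw [hcons, Fin.range_cons, hrange,
      Set.insert_sdiff_self_of_mem (s := G.neighborSet v) (hadj v)]

theorem IsBipartiteWith.exists_isOneFactorization_fin {k : ℕ} [G.LocallyFinite]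
    (h : G.IsBipartiteWith s t) (hG : G.IsRegularOfDegree k) :
    ∃ τ : Fin k → Perm V, G.IsOneFactorization τ := by
  induction k generalizing G with
  | zero =>
    refine ⟨Fin.elim0, ⟨fun i => i.elim0, fun _ => injective_of_subsingleton _, fun v => ?_⟩⟩
    rw [Set.range_eq_empty, eq_comm, ← Set.ncard_eq_zero (G.neighborSet v).toFinite,
      ← degree_eq_ncard_neighborSet, hG v]
  | succ k ih =>
    obtain ⟨M, hM⟩ := exists_isPerfectMatching_of_forall_ncard_le h
      (hG.ncard_le_ncard_iUnion_neighborSet k.succ_pos)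
    obtain ⟨τ₀, hτ₀, hMτ₀⟩ := hM.exists_involutive
    have hadj : ∀ v, G.Adj v (τ₀ v) := fun v =>
      M.adj_sub (show τ₀ v ∈ M.neighborSet v from (hMτ₀ v).symm ▸ rfl)
    have hN : ∀ v, (G \ M.spanningCoe).neighborSet v = G.neighborSet v \ {τ₀ v} := fun v => by
      rw [neighborSet_sdiff, ← hMτ₀]; rfl
    have : (G \ M.spanningCoe).LocallyFinite := fun v =>
      ((G.neighborSet v).toFinite.subset (hN v ▸ Set.sdiff_subset)).fintype
    obtain ⟨τ, hτ⟩ := ih (h.anti sdiff_le) (hG.of_neighborSet_eq_diff hadj hN)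
    exact ⟨Fin.cons τ₀ τ, hτ.cons hτ₀ hadj hN⟩

theorem IsBipartiteWith.exists_isOneFactorization {ι : Type*} [Fintype ι] [G.LocallyFinite]
    (h : G.IsBipartiteWith s t) (hG : G.IsRegularOfDegree (Fintype.card ι)) :
    ∃ τ : ι → Perm V, G.IsOneFactorization τ :=
  have ⟨τ, hτ⟩ := h.exists_isOneFactorization_fin hG
  ⟨τ ∘ Fintype.equivFin ι, hτ.comp_equiv _⟩

theorem IsBipartiteWith.freeProductStructure [G.LocallyFinite] {d : ℕ}
    (h : G.IsBipartiteWith s sᶜ) (hG : G.IsRegularOfDegree (2 * d + 1)) :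
    FreeProductStructure G d := by
  classical
  obtain ⟨τ, hτ⟩ := h.exists_isOneFactorization (ι := (Fin d ⊕ Fin d) ⊕ Fin 1)
    (by simpa [two_mul] using hG)
  have hswap : ∀ i x, τ i x ∈ s ↔ x ∉ s := fun i x => h.mem_iff_notMem_of_adj (hτ.adj i x)
  choose σ hσ using fun i : Fin d => Perm.exists_piecewise_of_involutive
    (hτ.involutive (.inl (.inl i))) (hτ.involutive (.inl (.inr i))) (hswap _) (hswap _)
  refine ⟨σ, τ (.inr 0), fun x => hτ.involutive _ x, fun x => (hτ.adj _ x).ne', fun x => ?_⟩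
  -- outside `s` the roles of `σ i` and `(σ i)⁻¹` are exchanged
  let e : (Fin d ⊕ Fin d) ⊕ Fin 1 ≃ (Fin d ⊕ Fin d) ⊕ Fin 1 :=
    if x ∈ s then Equiv.refl _ else (Equiv.sumComm _ _).sumCongr (Equiv.refl _)
  have hfam : Sum.elim (Sum.elim (fun i => σ i x) (fun i => (σ i)⁻¹ x)) (fun _ => τ (.inr 0) x) =
      (fun u => τ u x) ∘ e := by
    funext u
    by_cases hx : x ∈ s <;> rcases u with (i | i) | i <;> simp [e, hx, hσ, Fin.fin_one_eq_zero]
  rw [hfam, EquivLike.range_comp]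
  exact ⟨(hτ.injective x).comp e.injective, hτ.range_eq x⟩

end SimpleGraph

def doubleCoverNeighborSetEquiv {V : Type*} (G : SimpleGraph V) (p : V × Bool) :
    (doubleCover G).neighborSet p ≃ G.neighborSet p.1 where
  toFun w := ⟨w.1.1, w.2.1⟩
  invFun w := ⟨(w.1, !p.2), w.2, by simp⟩
  left_inv w := by
    obtain ⟨⟨w, b⟩, -, hb⟩ := w
    exact Subtype.ext (Prod.ext rfl (Bool.eq_not_of_ne hb.symm).symm)
  right_inv _ := rfl

noncomputable instance {V : Type*} (G : SimpleGraph V) [G.LocallyFinite] :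
    (doubleCover G).LocallyFinite :=
  fun p => Fintype.ofEquiv _ (doubleCoverNeighborSetEquiv G p).symm

theorem SimpleGraph.IsRegularOfDegree.doubleCover {V : Type*} {G : SimpleGraph V}
    [G.LocallyFinite] {k : ℕ} (hG : G.IsRegularOfDegree k) :
    (doubleCover G).IsRegularOfDegree k := fun p => by
  rw [← SimpleGraph.card_neighborSet_eq_degree,
    Fintype.card_congr (doubleCoverNeighborSetEquiv G p), SimpleGraph.card_neighborSet_eq_degree,
    hG]

theorem isBipartiteWith_doubleCover {V : Type*} (G : SimpleGraph V) :
    (doubleCover G).IsBipartiteWith {p | p.2 = true} {p | p.2 = true}ᶜ := by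
  refine ⟨disjoint_compl_right, fun p q hpq => ?_⟩
  have hne : p.2 ≠ q.2 := hpq.2
  cases hp : p.2 <;> cases hq : q.2 <;> simp_all

theorem bipartite_or_doubleCover_freeProduct_general {V : Type*} (G : SimpleGraph V)
    [G.LocallyFinite] (d : ℕ)
    (hreg : G.IsRegularOfDegree (2 * d + 1)) :
    (G.Colorable 2 → FreeProductStructure G d) ∧
    (¬ G.Colorable 2 → FreeProductStructure (doubleCover G) d) := by
  constructor
  · intro hbip
    obtain ⟨s, t, h⟩ := SimpleGraph.IsBipartite.exists_isBipartiteWith hbip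
    exact h.compl_right.freeProductStructure hreg
  · intro _
    exact (isBipartiteWith_doubleCover G).freeProductStructure hreg.doubleCover

/-- Let `G` be a connected locally finite `(2d+1)`-regular simple graph.
If `G` is bipartite then `G` carries `d` permutations and a fixed-point-free involution
describing all neighborhoods; otherwise its canonical double cover does.  (Equivalently:
`G`, if bipartite, or `G ⊗ K₂`, otherwise, is isomorphic to a Schreier graph of
`F_d ∗ (ℤ/2ℤ)`.) -/
theorem bipartite_or_doubleCover_freeProduct {V : Type*} (G : SimpleGraph V)
    [G.LocallyFinite] (d : ℕ) (hconn : G.Connected)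
    (hreg : G.IsRegularOfDegree (2 * d + 1)) :
    (G.Colorable 2 → FreeProductStructure G d) ∧
    (¬ G.Colorable 2 → FreeProductStructure (doubleCover G) d) :=
  bipartite_or_doubleCover_freeProduct_general G d hreg
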